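/- The map δ restricts to a bijection from the hyperoctahedral group B_n (signed permutations of {±1,...,±n}) to the set of centrally symmetric noncrossing arc diagrams on 2n points. -/

import Mathlib

/-!
On the common span of the arcs of two descents `i < j` of `π`, the arc of the later descent lies
weakly left of the earlier one (compare the positions of the values, `descentSide`), so `δ(π)` is
noncrossing. Conjugating by `w₀` reverses positions and values, which carries the arc of the
descent at `i` to the half-turn of the arc of the descent at `n - 2 - i`; hence `δ(w₀ π w₀)` is the
half-turn image of `δ(π)`, and `δ` maps `B_n` into centrally symmetric diagrams.

That `δ` is a bijection from all permutations onto noncrossing diagrams is proved by induction on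
the number of points. The last entry of `π` is the greatest `v` such that no arc of `δ(π)` ends at
`v` and every arc spanning `v` passes to the left of it. Deleting that entry from `π` deletes the
point `v` from the arcs with no endpoint at `v`, and a noncrossing diagram is determined by `v` and
those arcs: the only arc that can start at `v` has no point on its right and ends at the greatest
such candidate of the smaller diagram. Finally, if `D = δ(π)` is centrally symmetric then `δ(w₀ π w₀) = D = δ(π)`, so `π ∈ B_n`.
-/

/-- A (combinatorial, type-A) arc on the points of `Fin n`: endpoints `p < q`
together with the set `R` of interior points passed on the right. -/
structure Arc (n : ℕ) where
  p : Fin n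
  q : Fin n
  R : Finset (Fin n)
  hpq : p < q
  hR : ∀ i ∈ R, p < i ∧ i < q

namespace Arc

variable {n : ℕ}

/-- The side of the arc `α` at a point `i` of its closed interval:
`0` at endpoints, `1` if `i` is right of `α`, `-1` if left. -/
def sgn (α : Arc n) (i : Fin n) : ℤ :=
  if i = α.p ∨ i = α.q then 0 else if i ∈ α.R then 1 else -1

/-- Two arcs cross if their relative horizontal order flips somewhere on the
intersection of their closed intervals of points. -/
def Crosses (α β : Arc n) : Prop :=
  ∃ i j : Fin n, max α.p β.p ≤ i ∧ i < j ∧ j ≤ min α.q β.q ∧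
    (sgn α i - sgn β i) * (sgn α j - sgn β j) < 0

/-- Two arcs are compatible if they do not share an upper endpoint, do not share
a lower endpoint, and do not cross. -/
def Compatible (α β : Arc n) : Prop :=
  α.p ≠ β.p ∧ α.q ≠ β.q ∧ ¬ Crosses α β

end Arc

/-- A noncrossing arc diagram: a set of pairwise compatible arcs. -/
def IsNCAD {n : ℕ} (D : Set (Arc n)) : Prop :=
  ∀ α ∈ D, ∀ β ∈ D, α ≠ β → Arc.Compatible α β

/-- The arc diagram `δ(π)` of a permutation `π`: one arc per descent, with
lower endpoint `π (i+1)`, upper endpoint `π i`, passing right of exactly the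
intermediate values occurring after position `i`. -/
def diagram {n : ℕ} (π : Equiv.Perm (Fin n)) : Set (Arc n) :=
  {α | ∃ (i : Fin n) (h : (i : ℕ) + 1 < n),
     π ⟨(i : ℕ) + 1, h⟩ < π i ∧ α.p = π ⟨(i : ℕ) + 1, h⟩ ∧ α.q = π i ∧
     ∀ x : Fin n, x ∈ α.R ↔ ∃ j : Fin n, i < j ∧ π j = x ∧ α.p < x ∧ x < α.q}

/-- `α` is the image of the arc `β` under the half turn (central symmetry). -/
def IsHalfTurn {n : ℕ} (β α : Arc n) : Prop :=
  α.p = β.q.rev ∧ α.q = β.p.rev ∧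
    ∀ x : Fin n, x ∈ α.R ↔ (β.p < x.rev ∧ x.rev < β.q ∧ x.rev ∉ β.R)

/-- A diagram is centrally symmetric if it is fixed by the half turn. -/
def CentSym {n : ℕ} (D : Set (Arc n)) : Prop :=
  ∀ α : Arc n, α ∈ D ↔ ∃ β ∈ D, IsHalfTurn β α

open Equiv

attribute [ext] Arc

namespace Arc

variable {n : ℕ} {α β : Arc n} {x : Fin n}

theorem sgn_of_endpoint (h : x = α.p ∨ x = α.q) : α.sgn x = 0 := if_pos h

theorem sgn_of_mem (h : x ∈ α.R) : α.sgn x = 1 := by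
  have := α.hR x h
  rw [sgn, if_neg (by rintro (rfl | rfl) <;> simp_all), if_pos h]

theorem sgn_of_lt_of_lt_of_notMem (h1 : α.p < x) (h2 : x < α.q) (h : x ∉ α.R) :
    α.sgn x = -1 := by
  rw [sgn, if_neg (by rintro (rfl | rfl) <;> simp_all), if_neg h]

theorem mem_R_of_sgn_pos (h : 0 < α.sgn x) : x ∈ α.R := by
  unfold sgn at h; split_ifs at h <;> simp_all

theorem Crosses.symm : α.Crosses β → β.Crosses α := by
  rintro ⟨i, j, hi, hij, hj, h⟩
  exact ⟨i, j, max_comm α.p β.p ▸ hi, hij, min_comm α.q β.q ▸ hj, by nlinarith⟩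

theorem crosses_of_sgn_sub_neg_of_pos {i j : Fin n} (hi : max α.p β.p ≤ i) (hij : i < j)
    (hj : j ≤ min α.q β.q) (hi' : α.sgn i - β.sgn i < 0) (hj' : 0 < α.sgn j - β.sgn j) :
    α.Crosses β :=
  ⟨i, j, hi, hij, hj, mul_neg_of_neg_of_pos hi' hj'⟩

end Arc

theorem IsNCAD.eq_of_p_eq {n : ℕ} {D : Set (Arc n)} (hD : IsNCAD D) {α β : Arc n} (hα : α ∈ D)
    (hβ : β ∈ D) (h : α.p = β.p) : α = β :=
  by_contra fun hne => (hD α hα β hβ hne).1 h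

section Descents

variable {n : ℕ} (π : Perm (Fin n))

def descentArc (i : Fin n) (hi : (i : ℕ) + 1 < n) (hd : π ⟨i + 1, hi⟩ < π i) : Arc n where
  p := π ⟨i + 1, hi⟩
  q := π i
  R := {x | i < π.symm x ∧ π ⟨i + 1, hi⟩ < x ∧ x < π i}
  hpq := hd
  hR _ hx := (Finset.mem_filter.1 hx).2.2

variable {π}

theorem mem_descentArc_R {i : Fin n} {hi hd} {x : Fin n} :
    x ∈ (descentArc π i hi hd).R ↔ i < π.symm x ∧ π ⟨i + 1, hi⟩ < x ∧ x < π i := by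
  simp [descentArc]

theorem mem_diagram {α : Arc n} :
    α ∈ diagram π ↔ ∃ i hi hd, descentArc π i hi hd = α := by
  have later (i x : Fin n) (P : Prop) : (∃ j, i < j ∧ π j = x ∧ P) ↔ i < π.symm x ∧ P :=
    ⟨fun ⟨j, hj, hjx, h⟩ => ⟨hjx ▸ by simpa using hj, h⟩,
      fun h => ⟨_, h.1, π.apply_symm_apply x, h.2⟩⟩
  constructor
  · rintro ⟨i, hi, hd, hp, hq, hR⟩
    refine ⟨i, hi, hd, Arc.ext hp.symm hq.symm (Finset.ext fun x => ?_)⟩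
    rw [mem_descentArc_R, hR, hp, hq, later]
  · rintro ⟨i, hi, hd, rfl⟩
    exact ⟨i, hi, hd, rfl, rfl, fun x => by rw [mem_descentArc_R, later]; rfl⟩

end Descents

section Noncrossing

variable {n : ℕ} {π : Perm (Fin n)}

def descentSide (i k : ℕ) : ℤ := if k = i ∨ k = i + 1 then 0 else if i < k then 1 else -1

theorem descentSide_anti {i j : ℕ} (hij : i < j) (k : ℕ) : descentSide j k ≤ descentSide i k := by
  unfold descentSide; split_ifs <;> omega

theorem sgn_descentArc {i : Fin n} {hi hd} {x : Fin n} (h1 : π ⟨i + 1, hi⟩ ≤ x) (h2 : x ≤ π i) :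
    (descentArc π i hi hd).sgn x = descentSide i (π.symm x) := by
  obtain ⟨k, rfl⟩ := π.surjective x
  rw [π.symm_apply_apply]
  by_cases hk : k = i ∨ (k : ℕ) = i + 1
  · rw [Arc.sgn_of_endpoint, descentSide, if_pos (hk.imp_left (congrArg Fin.val))]
    rcases hk with rfl | hk
    · exact Or.inr rfl
    · exact Or.inl (congrArg π (Fin.ext hk))
  have hp : π ⟨i + 1, hi⟩ < π k := h1.lt_of_ne fun h => hk (Or.inr (by rw [← π.injective h]))
  have hq : π k < π i := h2.lt_of_ne fun h => hk (Or.inl (π.injective h))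
  have hk' : ¬ ((k : ℕ) = i ∨ (k : ℕ) = i + 1) := by rwa [Fin.val_eq_val]
  by_cases hik : i < k
  · rw [Arc.sgn_of_mem (mem_descentArc_R.2 (by simpa using ⟨hik, hp, hq⟩)), descentSide,
      if_neg hk', if_pos (Fin.lt_def.1 hik)]
  · rw [Arc.sgn_of_lt_of_lt_of_notMem hp hq (by simp [mem_descentArc_R, hik]), descentSide,
      if_neg hk', if_neg (mt Fin.lt_def.2 hik)]

theorem not_crosses_descentArc {i j : Fin n} (hij : i < j) {hi hd hj hd'} :
    ¬ (descentArc π i hi hd).Crosses (descentArc π j hj hd') := by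
  rintro ⟨x, y, hx, hxy, hy, h⟩
  simp only [max_le_iff, le_min_iff] at hx hy
  have side : ∀ z, π ⟨i + 1, hi⟩ ≤ z → π ⟨j + 1, hj⟩ ≤ z → z ≤ π i → z ≤ π j →
      0 ≤ (descentArc π i hi hd).sgn z - (descentArc π j hj hd').sgn z := by
    intro z h1 h2 h3 h4
    rw [sgn_descentArc h1 h3, sgn_descentArc h2 h4, sub_nonneg]
    exact descentSide_anti hij _
  exact h.not_ge <| mul_nonneg
    (side x hx.1 hx.2 (hxy.le.trans hy.1) (hxy.le.trans hy.2))
    (side y (hx.1.trans hxy.le) (hx.2.trans hxy.le) hy.1 hy.2)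

theorem isNCAD_diagram (π : Perm (Fin n)) : IsNCAD (diagram π) := by
  simp only [IsNCAD, mem_diagram]
  rintro _ ⟨i, hi, hd, rfl⟩ _ ⟨j, hj, hd', rfl⟩ hne
  have hij : i ≠ j := by rintro rfl; exact hne rfl
  refine ⟨fun h => hij ?_, fun h => hij (π.injective h), ?_⟩
  · simpa [Fin.ext_iff] using π.injective h
  rcases hij.lt_or_gt with hij | hij
  · exact not_crosses_descentArc hij
  · exact fun h => not_crosses_descentArc hij h.symm
end Noncrossing

section HalfTurn

variable {n : ℕ}

theorem IsHalfTurn.unique {β α α' : Arc n} (h : IsHalfTurn β α) (h' : IsHalfTurn β α') :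
    α = α' :=
  Arc.ext (h.1.trans h'.1.symm) (h.2.1.trans h'.2.1.symm) (Finset.ext fun x => by
    rw [h.2.2, h'.2.2])

theorem IsHalfTurn.symm {β α : Arc n} (h : IsHalfTurn β α) : IsHalfTurn α β := by
  obtain ⟨hp, hq, hR⟩ := h
  refine ⟨by rw [hq, Fin.rev_rev], by rw [hp, Fin.rev_rev], fun x => ?_⟩
  rw [hp, hq, Fin.rev_lt_rev, Fin.rev_lt_rev, hR, Fin.rev_rev]
  constructor
  · intro hx
    have := β.hR x hx
    exact ⟨this.2, this.1, fun h => h.2.2 hx⟩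
  · rintro ⟨h1, h2, h3⟩
    by_contra hx
    exact h3 ⟨h2, h1, hx⟩

theorem revPerm_conj_apply (π : Perm (Fin n)) (x : Fin n) :
    (Fin.revPerm * π * Fin.revPerm : Perm (Fin n)) x = (π x.rev).rev := rfl

theorem revPerm_conj_symm_apply (π : Perm (Fin n)) (x : Fin n) :
    (Fin.revPerm * π * Fin.revPerm).symm x = (π.symm x.rev).rev := by
  rw [Equiv.symm_apply_eq, revPerm_conj_apply, Fin.rev_rev, π.apply_symm_apply, Fin.rev_rev]

theorem revPerm_conj_revPerm_conj (π : Perm (Fin n)) :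
    Fin.revPerm * (Fin.revPerm * π * Fin.revPerm) * Fin.revPerm = π := by
  ext x
  simp [revPerm_conj_apply]

theorem rev_mk_succ_eq {i j : Fin n} (hj : (j : ℕ) + 1 < n) (hij : (i : ℕ) + j + 2 = n) :
    (⟨j + 1, hj⟩ : Fin n).rev = i :=
  Fin.ext (by simp only [Fin.val_rev]; omega)

theorem rev_eq_mk_succ {i j : Fin n} (hi : (i : ℕ) + 1 < n) (hij : (i : ℕ) + j + 2 = n) :
    j.rev = ⟨i + 1, hi⟩ :=
  Fin.ext (by simp only [Fin.val_rev]; omega)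

theorem isHalfTurn_descentArc (π : Perm (Fin n)) {i j : Fin n} {hi hj} (hij : (i : ℕ) + j + 2 = n)
    {hd hd'} : IsHalfTurn (descentArc π i hi hd)
      (descentArc (Fin.revPerm * π * Fin.revPerm) j hj hd') := by
  refine ⟨by simp [descentArc, rev_mk_succ_eq hj hij], by simp [descentArc, rev_eq_mk_succ hi hij],
    fun x => ?_⟩
  rw [mem_descentArc_R, mem_descentArc_R]
  simp only [descentArc, revPerm_conj_apply, revPerm_conj_symm_apply, rev_mk_succ_eq hj hij,
    rev_eq_mk_succ hi hij]
  rw [← Fin.rev_rev x, Fin.rev_lt_rev, Fin.rev_lt_rev, Fin.rev_rev]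
  have key : j < (π.symm x.rev).rev ↔ ¬ i < π.symm x.rev := by
    simp only [Fin.lt_def, Fin.val_rev, not_lt]; omega
  rw [key]
  tauto

theorem exists_isHalfTurn_mem_diagram_revPerm_conj {π : Perm (Fin n)} {α : Arc n}
    (hα : α ∈ diagram π) :
    ∃ β ∈ diagram (Fin.revPerm * π * Fin.revPerm), IsHalfTurn α β := by
  obtain ⟨i, hi, hd, rfl⟩ := mem_diagram.1 hα
  let j : Fin n := ⟨n - i - 2, by omega⟩
  have hij : (i : ℕ) + j + 2 = n := by simp only [j]; omega
  have hj : (j : ℕ) + 1 < n := by omega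
  have hd' : (Fin.revPerm * π * Fin.revPerm : Perm (Fin n)) ⟨j + 1, hj⟩ <
      (Fin.revPerm * π * Fin.revPerm : Perm (Fin n)) j := by
    simpa only [revPerm_conj_apply, rev_mk_succ_eq hj hij, rev_eq_mk_succ hi hij,
      Fin.rev_lt_rev] using hd
  exact ⟨_, mem_diagram.2 ⟨j, hj, hd', rfl⟩, isHalfTurn_descentArc π hij⟩

theorem diagram_revPerm_conj (π : Perm (Fin n)) :
    diagram (Fin.revPerm * π * Fin.revPerm) = {α | ∃ β ∈ diagram π, IsHalfTurn β α} := by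
  ext α
  constructor
  · intro hα
    obtain ⟨β, hβ, h⟩ := exists_isHalfTurn_mem_diagram_revPerm_conj hα
    rw [revPerm_conj_revPerm_conj] at hβ
    exact ⟨β, hβ, h.symm⟩
  · rintro ⟨β, hβ, h⟩
    obtain ⟨α', hα', h'⟩ := exists_isHalfTurn_mem_diagram_revPerm_conj hβ
    rwa [h.unique h']

theorem centSym_diagram {π : Perm (Fin n)} (hπ : Fin.revPerm * π * Fin.revPerm = π) :
    CentSym (diagram π) := by
  have h := diagram_revPerm_conj π
  rw [hπ] at h
  exact fun α => Set.ext_iff.1 h α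

end HalfTurn

section Lift

variable {m : ℕ} (v : Fin (m + 1))

/-- Insert a new point `v`; the lifted arc passes to the left of `v` whenever it spans it. -/
def liftArc (α : Arc m) : Arc (m + 1) where
  p := v.succAbove α.p
  q := v.succAbove α.q
  R := α.R.map v.succAboveEmb ∪
    ({v} : Finset _).filter (fun x => v.succAbove α.p < x ∧ x < v.succAbove α.q)
  hpq := Fin.succAbove_lt_succAbove_iff.2 α.hpq
  hR x hx := by
    rcases Finset.mem_union.1 hx with hx | hx
    · obtain ⟨y, hy, rfl⟩ := Finset.mem_map.1 hx
      exact (α.hR y hy).imp Fin.succAbove_lt_succAbove_iff.2 Fin.succAbove_lt_succAbove_iff.2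
    · exact (Finset.mem_filter.1 hx).2

variable {v} {α β : Arc m}

@[simp] theorem liftArc_p : (liftArc v α).p = v.succAbove α.p := rfl

@[simp] theorem liftArc_q : (liftArc v α).q = v.succAbove α.q := rfl

theorem succAbove_mem_liftArc_R {y : Fin m} : v.succAbove y ∈ (liftArc v α).R ↔ y ∈ α.R := by
  simp [liftArc, Fin.succAbove_ne]

theorem self_mem_liftArc_R :
    v ∈ (liftArc v α).R ↔ v.succAbove α.p < v ∧ v < v.succAbove α.q := by
  simp [liftArc, Fin.succAbove_ne]

theorem liftArc_injective : Function.Injective (liftArc v) := fun _ _ h =>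
  Arc.ext (Fin.succAbove_right_injective (congrArg Arc.p h))
    (Fin.succAbove_right_injective (congrArg Arc.q h))
    (Finset.ext fun y => by rw [← succAbove_mem_liftArc_R (v := v), h, succAbove_mem_liftArc_R])

theorem sgn_liftArc (y : Fin m) : (liftArc v α).sgn (v.succAbove y) = α.sgn y := by
  simp only [Arc.sgn, liftArc_p, liftArc_q, Fin.succAbove_right_inj, succAbove_mem_liftArc_R]

theorem Arc.Crosses.liftArc (h : α.Crosses β) : (liftArc v α).Crosses (liftArc v β) := by
  obtain ⟨i, j, hi, hij, hj, hs⟩ := h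
  refine ⟨v.succAbove i, v.succAbove j, ?_, Fin.succAbove_lt_succAbove_iff.2 hij, ?_, ?_⟩
  · simpa [Fin.succAbove_le_succAbove_iff] using hi
  · simpa [Fin.succAbove_le_succAbove_iff] using hj
  · simpa only [sgn_liftArc] using hs

theorem IsNCAD.preimage_liftArc {D : Set (Arc (m + 1))} (hD : IsNCAD D) :
    IsNCAD (liftArc v ⁻¹' D) := fun _ hα _ hβ hne =>
  have h := hD _ hα _ hβ (liftArc_injective.ne hne)
  ⟨fun hp => h.1 (congrArg v.succAbove hp), fun hq => h.2.1 (congrArg v.succAbove hq),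
    fun hc => h.2.2 hc.liftArc⟩

theorem exists_liftArc_eq {α : Arc (m + 1)} (hp : α.p ≠ v) (hq : α.q ≠ v)
    (hv : v ∈ α.R ↔ α.p < v ∧ v < α.q) : ∃ α', liftArc v α' = α := by
  obtain ⟨p', hp'⟩ := Fin.exists_succAbove_eq hp
  obtain ⟨q', hq'⟩ := Fin.exists_succAbove_eq hq
  refine ⟨⟨p', q', {y | v.succAbove y ∈ α.R},
    Fin.succAbove_lt_succAbove_iff.1 (hp' ▸ hq' ▸ α.hpq), fun y hy => ?_⟩, ?_⟩
  · have := α.hR _ (Finset.mem_filter.1 hy).2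
    rw [← hp', ← hq'] at this
    exact this.imp Fin.succAbove_lt_succAbove_iff.1 Fin.succAbove_lt_succAbove_iff.1
  · refine Arc.ext hp' hq' (Finset.ext fun x => ?_)
    rcases eq_or_ne x v with hx | hx
    · rw [hx, self_mem_liftArc_R, hv]
      show v.succAbove p' < v ∧ v < v.succAbove q' ↔ _
      rw [hp', hq']
    · obtain ⟨y, rfl⟩ := Fin.exists_succAbove_eq hx
      rw [succAbove_mem_liftArc_R]
      simp

end Lift

section Extension

variable {m : ℕ} (v : Fin (m + 1)) (π : Perm (Fin m))

/-- The permutation with last entry `v` whose other entries are those of `π`, lifted past `v`. -/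
def extPerm : Perm (Fin (m + 1)) :=
  (finSuccEquiv' (Fin.last m)).trans ((Equiv.optionCongr π).trans (finSuccEquiv' v).symm)

@[simp] theorem extPerm_last : extPerm v π (Fin.last m) = v := by
  simp [extPerm, finSuccEquiv'_at]

@[simp] theorem extPerm_castSucc (k : Fin m) : extPerm v π k.castSucc = v.succAbove (π k) := by
  rw [← Fin.succAbove_last, extPerm]
  simp only [Equiv.trans_apply, finSuccEquiv'_succAbove, Equiv.optionCongr_apply, Option.map_some,
    finSuccEquiv'_symm_some]

theorem extPerm_symm_self : (extPerm v π).symm v = Fin.last m := by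
  rw [Equiv.symm_apply_eq, extPerm_last]

theorem extPerm_symm_succAbove (y : Fin m) :
    (extPerm v π).symm (v.succAbove y) = (π.symm y).castSucc := by
  rw [Equiv.symm_apply_eq, extPerm_castSucc, π.apply_symm_apply]

theorem exists_extPerm_eq (σ : Perm (Fin (m + 1))) : ∃ π, extPerm (σ (Fin.last m)) π = σ := by
  have hne (k : Fin m) : σ k.castSucc ≠ σ (Fin.last m) :=
    fun h => (Fin.castSucc_lt_last k).ne (σ.injective h)
  choose f hf using fun k => Fin.exists_succAbove_eq (hne k)
  have hf_inj : Function.Injective f := fun a b h =>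
    Fin.castSucc_injective _ (σ.injective (by rw [← hf a, ← hf b, h]))
  refine ⟨Equiv.ofBijective f hf_inj.bijective_of_finite, Equiv.ext fun x => ?_⟩
  induction x using Fin.lastCases with
  | last => exact extPerm_last _ _
  | cast k => rw [extPerm_castSucc, Equiv.ofBijective_apply, hf]

variable {v π}

theorem liftArc_descentArc {i : Fin m} {hi hd hi' hd'} :
    liftArc v (descentArc π i hi hd) = descentArc (extPerm v π) i.castSucc hi' hd' := by
  have e : (⟨i.castSucc + 1, hi'⟩ : Fin (m + 1)) = (⟨i + 1, hi⟩ : Fin m).castSucc := rfl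
  refine Arc.ext (by simp only [descentArc, liftArc_p, e, extPerm_castSucc]) (by simp [descentArc])
    (Finset.ext fun x => ?_)
  rw [mem_descentArc_R]
  simp only [e, extPerm_castSucc]
  rcases eq_or_ne x v with rfl | hx
  · rw [self_mem_liftArc_R, extPerm_symm_self]
    simp [descentArc, Fin.castSucc_lt_last]
  · obtain ⟨y, rfl⟩ := Fin.exists_succAbove_eq hx
    rw [succAbove_mem_liftArc_R, mem_descentArc_R, extPerm_symm_succAbove]
    simp only [Fin.castSucc_lt_castSucc_iff, Fin.succAbove_lt_succAbove_iff]

theorem preimage_liftArc_diagram_extPerm :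
    liftArc v ⁻¹' diagram (extPerm v π) = diagram π := by
  ext α
  simp only [Set.mem_preimage, mem_diagram]
  constructor
  · rintro ⟨i, hi, hd, h⟩
    have hi' : (i : ℕ) + 1 < m := by
      by_contra hm
      have hlast : (⟨i + 1, hi⟩ : Fin (m + 1)) = Fin.last m := Fin.ext (by simp; omega)
      have hv : extPerm v π ⟨i + 1, hi⟩ = v := by rw [hlast, extPerm_last]
      exact Fin.succAbove_ne v α.p ((congrArg Arc.p h.symm).trans hv)
    obtain ⟨i, rfl⟩ : ∃ k : Fin m, k.castSucc = i := ⟨⟨i, by omega⟩, rfl⟩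
    have hd' : π ⟨i + 1, hi'⟩ < π i := by
      rw [← Fin.succAbove_lt_succAbove_iff (p := v), ← extPerm_castSucc, ← extPerm_castSucc]
      exact hd
    exact ⟨i, hi', hd', liftArc_injective (liftArc_descentArc.trans h)⟩
  · rintro ⟨i, hi, hd, rfl⟩
    have hd' : extPerm v π ⟨i.castSucc + 1, by simp⟩ < extPerm v π i.castSucc := by
      rw [show (⟨i.castSucc + 1, _⟩ : Fin (m + 1)) = (⟨i + 1, hi⟩ : Fin m).castSucc from rfl,
        extPerm_castSucc, extPerm_castSucc, Fin.succAbove_lt_succAbove_iff]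
      exact hd
    exact ⟨i.castSucc, _, hd', liftArc_descentArc.symm⟩

end Extension

theorem Fin.exists_step_down {n : ℕ} {β : Type*} [LinearOrder β] {f : Fin n → β} {u : β}
    {a b : Fin n} (hab : a ≤ b) (ha : u ≤ f a) (hb : f b < u) :
    ∃ (j : Fin n) (hj : (j : ℕ) + 1 < n), a ≤ j ∧ u ≤ f j ∧ f ⟨j + 1, hj⟩ < u := by
  obtain ⟨b, hbn⟩ := b
  induction b with
  | zero => exact absurd ((Fin.ext (Nat.le_zero.1 hab) : a = ⟨0, hbn⟩) ▸ hb) (not_lt.2 ha)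
  | succ b ih =>
    have hab' : a ≤ ⟨b, by omega⟩ := by
      refine Fin.le_def.2 (Nat.le_of_lt_succ ((Fin.le_def.1 hab).lt_of_ne fun h => ?_))
      exact absurd (Fin.ext h ▸ hb) (not_lt.2 ha)
    by_cases hfb : f ⟨b, by omega⟩ < u
    · exact ih _ hab' hfb
    · exact ⟨⟨b, by omega⟩, hbn, hab', not_lt.1 hfb, hb⟩

section Candidates

variable {n : ℕ}

def IsLastCandidate (D : Set (Arc n)) (v : Fin n) : Prop :=
  (∀ α ∈ D, α.q ≠ v) ∧ ∀ α ∈ D, α.p < v → v < α.q → v ∈ α.R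

theorem isGreatest_lastCandidate_diagram {m : ℕ} (σ : Perm (Fin (m + 1))) :
    IsGreatest {v | IsLastCandidate (diagram σ) v} (σ (Fin.last m)) := by
  refine ⟨⟨?_, ?_⟩, fun u hu => not_lt.1 fun hlt => ?_⟩
  · rintro _ hα h
    obtain ⟨i, hi, hd, rfl⟩ := mem_diagram.1 hα
    have := congrArg Fin.val (σ.injective h)
    simp only [Fin.val_last] at this
    omega
  · rintro _ hα hp hq
    obtain ⟨i, hi, hd, rfl⟩ := mem_diagram.1 hα
    rw [mem_descentArc_R, σ.symm_apply_apply]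
    exact ⟨Fin.lt_def.2 (by rw [Fin.val_last]; omega), hp, hq⟩
  · obtain ⟨j, hj, hkj, huj, hju⟩ := Fin.exists_step_down (f := σ) (Fin.le_last (σ.symm u))
      (σ.apply_symm_apply u).ge hlt
    have hα := mem_diagram.2 ⟨j, hj, hju.trans_le huj, rfl⟩
    rcases huj.lt_or_eq with huj | huj
    · have := (mem_descentArc_R.1 (hu.2 _ hα hju huj)).1
      exact (this.trans_le hkj).false
    · exact hu.1 _ hα huj.symm

theorem exists_isGreatest_lastCandidate {m : ℕ} (D : Set (Arc (m + 1))) :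
    ∃ v, IsGreatest {v | IsLastCandidate D v} v := by
  have h0 : IsLastCandidate D 0 :=
    ⟨fun α _ h => Fin.not_lt_zero _ (h ▸ α.hpq), fun _ _ h => absurd h (Fin.not_lt_zero _)⟩
  obtain ⟨v, hv, hmax⟩ :=
    Set.exists_max_image {v | IsLastCandidate D v} id (Set.toFinite _) ⟨0, h0⟩
  exact ⟨v, hv, hmax⟩

variable {D : Set (Arc n)} {v x : Fin n} {α β γ : Arc n}

theorem IsLastCandidate.mem_R_iff (hv : IsLastCandidate D v) (hα : α ∈ D) :
    v ∈ α.R ↔ α.p < v ∧ v < α.q :=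
  ⟨α.hR v, fun h => hv.2 α hα h.1 h.2⟩

/-- `β.sgn - γ.sgn` is negative at the left end of the common span (`v` is a candidate and `β.R`
has nothing below `x`), so it cannot be positive at `x` without a crossing. -/
theorem IsLastCandidate.sgn_le_sgn (hD : IsNCAD D) (hv : IsLastCandidate D v) (hβ : β ∈ D)
    (hγ : γ ∈ D) (hne : γ ≠ β) (hβp : β.p = v) (hvx : v < x) (hxβ : x ≤ β.q) (hγx : γ.p < x)
    (hxγ : x ≤ γ.q) (hR : ∀ y ∈ β.R, x ≤ y) : β.sgn x ≤ γ.sgn x := by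
  by_contra! hlt
  have hcomp := hD β hβ γ hγ hne.symm
  rcases lt_trichotomy γ.p v with hc | hc | hc
  · refine hcomp.2.2 (Arc.crosses_of_sgn_sub_neg_of_pos (i := v) (by simp [hβp, hc.le]) hvx
      (le_min hxβ hxγ) ?_ (sub_pos.2 hlt))
    rw [Arc.sgn_of_endpoint (Or.inl hβp.symm),
      Arc.sgn_of_mem (hv.2 γ hγ hc (hvx.trans_le hxγ))]
    norm_num
  · exact hcomp.1 (hβp.trans hc.symm)
  · refine hcomp.2.2 (Arc.crosses_of_sgn_sub_neg_of_pos (i := γ.p) (by simp [hβp, hc.le]) hγx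
      (le_min hxβ hxγ) ?_ (sub_pos.2 hlt))
    rw [Arc.sgn_of_lt_of_lt_of_notMem (hβp ▸ hc) (hγx.trans_le hxβ)
        fun h => (hR _ h).not_gt hγx, Arc.sgn_of_endpoint (Or.inl rfl)]
    norm_num

theorem IsNCAD.R_eq_empty_of_p_eq (hD : IsNCAD D) (hv : IsGreatest {v | IsLastCandidate D v} v)
    (hβ : β ∈ D) (hβp : β.p = v) : β.R = ∅ := by
  by_contra hne
  have hR : β.R.Nonempty := Finset.nonempty_iff_ne_empty.2 hne
  set x := β.R.min' hR
  have hxR : x ∈ β.R := β.R.min'_mem hR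
  have hvx : v < x := hβp ▸ (β.hR x hxR).1
  have hspan : ∀ γ ∈ D, γ.p < x → x ≤ γ.q → x ∈ γ.R := by
    intro γ hγ hγx hxγ
    by_cases hγβ : γ = β
    · exact hγβ ▸ hxR
    have := hv.1.sgn_le_sgn hD hβ hγ hγβ hβp hvx (β.hR x hxR).2.le hγx hxγ
      fun y hy => β.R.min'_le y hy
    rw [Arc.sgn_of_mem hxR] at this
    exact Arc.mem_R_of_sgn_pos (one_pos.trans_le this)
  refine (hv.2 ⟨fun γ hγ hγq => ?_, fun γ hγ h1 h2 => hspan γ hγ h1 h2.le⟩).not_gt hvx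
  have := γ.hR x (hspan γ hγ (hγq ▸ γ.hpq) hγq.ge)
  exact this.2.ne hγq.symm

theorem IsLastCandidate.exists_liftArc_eq {m : ℕ} {D : Set (Arc (m + 1))} {v : Fin (m + 1)}
    {α : Arc (m + 1)} (hv : IsLastCandidate D v) (hα : α ∈ D) (hp : α.p ≠ v) :
    ∃ α', liftArc v α' = α :=
  _root_.exists_liftArc_eq hp (hv.1 α hα) (hv.mem_R_iff hα)

end Candidates

section Recursion

variable {m : ℕ} {D E : Set (Arc (m + 1))} {v : Fin (m + 1)}

theorem IsLastCandidate.succAbove (hv : IsLastCandidate D v) {u : Fin m}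
    (hu : IsLastCandidate (liftArc v ⁻¹' D) u)
    (hq : ∀ α ∈ D, α.p = v → α.q < v.succAbove u) : IsLastCandidate D (v.succAbove u) := by
  refine ⟨fun α hα => ?_, fun α hα => ?_⟩ <;> by_cases hαp : α.p = v
  · exact (hq α hα hαp).ne
  · obtain ⟨α', rfl⟩ := hv.exists_liftArc_eq hα hαp
    exact fun h => hu.1 α' hα (Fin.succAbove_right_injective h)
  · exact fun _ h => absurd (hq α hα hαp) h.not_gt
  · obtain ⟨α', rfl⟩ := hv.exists_liftArc_eq hα hαp
    intro h1 h2
    exact succAbove_mem_liftArc_R.2 (hu.2 α' hα (Fin.succAbove_lt_succAbove_iff.1 h1)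
      (Fin.succAbove_lt_succAbove_iff.1 h2))

theorem IsNCAD.isGreatest_preimage_liftArc (hD : IsNCAD D)
    (hv : IsGreatest {v | IsLastCandidate D v} v) {β : Arc (m + 1)} (hβ : β ∈ D) (hβp : β.p = v)
    {w : Fin m} (hw : v.succAbove w = β.q) :
    IsGreatest {u | IsLastCandidate (liftArc v ⁻¹' D) u} w := by
  have hRβ := hD.R_eq_empty_of_p_eq hv hβ hβp
  have hvβ : v < β.q := hβp ▸ β.hpq
  have hne (α' : Arc m) : liftArc v α' ≠ β :=
    fun h => Fin.succAbove_ne v α'.p ((congrArg Arc.p h).trans hβp)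
  refine ⟨⟨fun α' hα' hq => ?_, fun α' hα' h1 h2 => ?_⟩, fun u hu => not_lt.1 fun hlt => ?_⟩
  · exact (hD _ hα' β hβ (hne α')).2.1 (by rw [liftArc_q, hq, hw])
  · rw [← Fin.succAbove_lt_succAbove_iff (p := v), hw] at h1 h2
    have := hv.1.sgn_le_sgn hD hβ hα' (hne α') hβp hvβ le_rfl h1 h2.le (by simp [hRβ])
    rw [Arc.sgn_of_endpoint (Or.inr rfl)] at this
    rw [← succAbove_mem_liftArc_R, hw]
    by_contra hR
    rw [Arc.sgn_of_lt_of_lt_of_notMem h1 h2 hR] at this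
    norm_num at this
  · have hq (α) (hα : α ∈ D) (hαp : α.p = v) : α.q < v.succAbove u := by
      rw [(hD.eq_of_p_eq hα hβ (hαp.trans hβp.symm)), ← hw]
      exact Fin.succAbove_lt_succAbove_iff.2 hlt
    exact (hv.2 (hv.1.succAbove hu hq)).not_gt (hvβ.trans (hq β hβ hβp))

theorem IsNCAD.subset_of_preimage_liftArc_eq (hD : IsNCAD D) (hE : IsNCAD E)
    (hvD : IsGreatest {v | IsLastCandidate D v} v) (hvE : IsGreatest {v | IsLastCandidate E v} v)
    (hDE : liftArc v ⁻¹' D = liftArc v ⁻¹' E) : D ⊆ E := by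
  intro α hα
  obtain hαp | hαp := ne_or_eq α.p v
  · obtain ⟨α', rfl⟩ := hvD.1.exists_liftArc_eq hα hαp
    exact (Set.ext_iff.1 hDE α').1 hα
  obtain ⟨w, hw⟩ := Fin.exists_succAbove_eq (hvD.1.1 α hα)
  have hwE := hD.isGreatest_preimage_liftArc hvD hα hαp hw
  rw [hDE] at hwE
  by_cases hγ : ∃ γ ∈ E, γ.p = v
  · obtain ⟨γ, hγ, hγp⟩ := hγ
    obtain ⟨w', hw'⟩ := Fin.exists_succAbove_eq (hvE.1.1 γ hγ)
    have hww := (hE.isGreatest_preimage_liftArc hvE hγ hγp hw').unique hwE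
    have hγα : γ = α := Arc.ext (hγp.trans hαp.symm) (by rw [← hw', ← hw, hww])
      (by rw [hE.R_eq_empty_of_p_eq hvE hγ hγp, hD.R_eq_empty_of_p_eq hvD hα hαp])
    exact hγα ▸ hγ
  · have := hvE.2 (hvE.1.succAbove hwE.1 fun γ hγ' hγp => absurd ⟨γ, hγ', hγp⟩ hγ)
    exact absurd (hw ▸ this) (not_le.2 (hαp ▸ α.hpq))

theorem IsNCAD.eq_of_preimage_liftArc_eq (hD : IsNCAD D) (hE : IsNCAD E)
    (hvD : IsGreatest {v | IsLastCandidate D v} v) (hvE : IsGreatest {v | IsLastCandidate E v} v)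
    (hDE : liftArc v ⁻¹' D = liftArc v ⁻¹' E) : D = E :=
  (hD.subset_of_preimage_liftArc_eq hE hvD hvE hDE).antisymm
    (hE.subset_of_preimage_liftArc_eq hD hvE hvD hDE.symm)

end Recursion

theorem diagram_injective : ∀ {N : ℕ}, Function.Injective (diagram : Perm (Fin N) → Set (Arc N))
  | 0 => fun π σ _ => Subsingleton.elim π σ
  | m + 1 => fun π σ h => by
    have hv : π (Fin.last m) = σ (Fin.last m) :=
      (isGreatest_lastCandidate_diagram π).unique (h ▸ isGreatest_lastCandidate_diagram σ)
    obtain ⟨π', hπ⟩ := exists_extPerm_eq π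
    obtain ⟨σ', hσ⟩ := exists_extPerm_eq σ
    rw [← hv] at hσ
    have : π' = σ' := diagram_injective <| by
      rw [← preimage_liftArc_diagram_extPerm (v := π (Fin.last m)), hπ, h, ← hσ,
        preimage_liftArc_diagram_extPerm]
    rw [← hπ, ← hσ, this]

theorem IsNCAD.exists_diagram_eq : ∀ {N : ℕ} {D : Set (Arc N)}, IsNCAD D → ∃ π, diagram π = D
  | 0, _, _ => ⟨1, Set.ext fun α => α.p.elim0⟩
  | m + 1, D, hD => by
    obtain ⟨v, hv⟩ := exists_isGreatest_lastCandidate D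
    obtain ⟨π', hπ'⟩ := (hD.preimage_liftArc (v := v)).exists_diagram_eq
    refine ⟨extPerm v π', (isNCAD_diagram _).eq_of_preimage_liftArc_eq hD ?_ hv ?_⟩
    · simpa using isGreatest_lastCandidate_diagram (extPerm v π')
    · rw [preimage_liftArc_diagram_extPerm, hπ']

/-- Identifying `B_n` with the permutations of `2n` points fixed by conjugation by
`w₀`, the map `δ` restricts to a bijection from `B_n` to the set of centrally
symmetric noncrossing arc diagrams on `2n` points. -/
theorem stmt10 (n : ℕ) :
    (∀ π : Equiv.Perm (Fin (2 * n)), Fin.revPerm * π * Fin.revPerm = π →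
        IsNCAD (diagram π) ∧ CentSym (diagram π)) ∧
    (∀ π σ : Equiv.Perm (Fin (2 * n)),
        Fin.revPerm * π * Fin.revPerm = π → Fin.revPerm * σ * Fin.revPerm = σ →
        diagram π = diagram σ → π = σ) ∧
    (∀ D : Set (Arc (2 * n)), IsNCAD D → CentSym D →
        ∃ π : Equiv.Perm (Fin (2 * n)),
          Fin.revPerm * π * Fin.revPerm = π ∧ diagram π = D) := by
  refine ⟨fun π hπ => ⟨isNCAD_diagram π, centSym_diagram hπ⟩,
    fun π σ _ _ h => diagram_injective h, fun D hD hCS => ?_⟩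
  obtain ⟨π, rfl⟩ := hD.exists_diagram_eq
  refine ⟨π, diagram_injective ?_, rfl⟩
  rw [diagram_revPerm_conj]
  exact Set.ext fun α => (hCS α).symm
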